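/- arXiv:2404.18725 — 4 statements merged into one kernel-verified Lean document; each statement's English description precedes it below -/
import Mathlib

section
/- ℤ² is not the union of three proper finite-index subgroups each of whose index is divisible by 3. -/
/-- `ℤ²` is not the union of three proper finite-index subgroups, each of
whose index is divisible by `3`. -/
theorem no_cover_by_three_lattices_index_div_three :
    ¬ ∃ Λ : Fin 3 → AddSubgroup (ℤ × ℤ),
      (∀ i, (Λ i).FiniteIndex ∧ Λ i ≠ ⊤ ∧ 3 ∣ (Λ i).index) ∧
      (∀ x : ℤ × ℤ, ∃ i, x ∈ Λ i) := by
  rintro ⟨Λ, hΛ, hcov⟩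
  -- the intersection
  set N : AddSubgroup (ℤ × ℤ) := ⨅ i, Λ i with hN
  have hNfi : N.FiniteIndex := AddSubgroup.finiteIndex_iInf fun i => (hΛ i).1
  have hNle : ∀ i, N ≤ Λ i := fun i => iInf_le _ i
  haveI := hNfi
  haveI : Finite ((ℤ × ℤ) ⧸ N) := AddSubgroup.finite_quotient_of_finiteIndex
  set Q := (ℤ × ℤ) ⧸ N
  set π : (ℤ × ℤ) →+ Q := QuotientAddGroup.mk' N with hπ
  have hsurj : Function.Surjective π := QuotientAddGroup.mk'_surjective N
  set S : Fin 3 → AddSubgroup Q := fun i => (Λ i).map π with hS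
  set n : ℕ := Nat.card Q with hn
  have hnN : n = N.index := rfl
  have hn0 : n ≠ 0 := hNfi.index_ne_zero
  -- index of image equals index of Λ i, and card * index = n
  have hkey : ∀ i, 3 * Nat.card (S i) ≤ n ∧ 1 ≤ Nat.card (S i) := by
    intro i
    have hker : π.ker ≤ Λ i := by
      rw [hπ, QuotientAddGroup.ker_mk']
      exact hNle i
    have hidx : (S i).index = (Λ i).index :=
      AddSubgroup.index_map_eq _ hsurj hker
    have hcard : Nat.card (S i) * (S i).index = n :=
      AddSubgroup.card_mul_index (S i)
    have h3 : 3 ≤ (Λ i).index := by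
      have := (hΛ i).2.2
      have hne : (Λ i).index ≠ 0 := (hΛ i).1.index_ne_zero
      omega
    have hpos : 0 < Nat.card (S i) := Nat.card_pos
    constructor
    · calc 3 * Nat.card (S i) ≤ (Λ i).index * Nat.card (S i) :=
            Nat.mul_le_mul_right _ h3
        _ = n := by rw [mul_comm, ← hidx, hcard]
    · exact hpos
  -- counting in the finite quotient
  haveI : Fintype Q := Fintype.ofFinite Q
  classical
  set F : Fin 3 → Finset Q := fun i => (S i : Set Q).toFinset with hF
  have hFcard : ∀ i, (F i).card = Nat.card (S i) := by
    intro i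
    rw [hF]
    simp [Set.toFinset_card, Nat.card_eq_fintype_card]
  have h0mem : ∀ i, (0 : Q) ∈ F i := by
    intro i
    simp [hF, Set.mem_toFinset]
  have hcover : (Finset.univ : Finset Q) ⊆ F 0 ∪ ((F 1).erase 0 ∪ (F 2).erase 0) := by
    intro x _
    obtain ⟨y, rfl⟩ := hsurj x
    obtain ⟨i, hi⟩ := hcov y
    have hmem : π y ∈ F i := by
      rw [hF, Set.mem_toFinset]
      exact AddSubgroup.mem_map.mpr ⟨y, hi, rfl⟩
    by_cases hx : π y = 0
    · exact Finset.mem_union_left _ (hx ▸ h0mem 0)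
    · fin_cases i
      · exact Finset.mem_union_left _ hmem
      · exact Finset.mem_union_right _ (Finset.mem_union_left _
          (Finset.mem_erase.mpr ⟨hx, hmem⟩))
      · exact Finset.mem_union_right _ (Finset.mem_union_right _
          (Finset.mem_erase.mpr ⟨hx, hmem⟩))
  have hcards : n ≤ (F 0).card + (((F 1).card - 1) + ((F 2).card - 1)) := by
    have h1 : n = (Finset.univ : Finset Q).card := by
      rw [hn, Nat.card_eq_fintype_card, Finset.card_univ]
    calc n = (Finset.univ : Finset Q).card := h1
      _ ≤ (F 0 ∪ ((F 1).erase 0 ∪ (F 2).erase 0)).card := Finset.card_le_card hcover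
      _ ≤ (F 0).card + ((F 1).erase 0 ∪ (F 2).erase 0).card := Finset.card_union_le _ _
      _ ≤ (F 0).card + (((F 1).erase 0).card + ((F 2).erase 0).card) := by
          exact Nat.add_le_add_left (Finset.card_union_le _ _) _
      _ = (F 0).card + (((F 1).card - 1) + ((F 2).card - 1)) := by
          rw [Finset.card_erase_of_mem (h0mem 1), Finset.card_erase_of_mem (h0mem 2)]
  have k0 := hkey 0
  have k1 := hkey 1
  have k2 := hkey 2
  rw [hFcard 0, hFcard 1, hFcard 2] at hcards
  omega
end

section
/- Let t₁, t₂, t₃, t₄ be integers with gcd(t₂, t₄) = 1 and gcd(t₁, t₃) = 1. If the three congruences t₁t₂ + t₂t₃ + t₃t₄ ≡ 0, t₁t₂ + t₁t₄ + t₃t₄ ≡ 0, and t₃t₄ - t₁t₂ ≡ 0 all hold modulo a prime p, then p = 3. -/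
/-- If `gcd(t₂,t₄) = gcd(t₁,t₃) = 1` and a prime `p` divides all three of
`t₁t₂+t₂t₃+t₃t₄`, `t₁t₂+t₁t₄+t₃t₄`, `t₃t₄-t₁t₂`, then `p = 3`. -/
theorem triple_vanishing_forces_three (t₁ t₂ t₃ t₄ : ℤ) (p : ℕ) (hp : p.Prime)
    (h24 : Int.gcd t₂ t₄ = 1) (h13 : Int.gcd t₁ t₃ = 1)
    (h1 : (p : ℤ) ∣ t₁ * t₂ + t₂ * t₃ + t₃ * t₄)
    (h2 : (p : ℤ) ∣ t₁ * t₂ + t₁ * t₄ + t₃ * t₄)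
    (h3 : (p : ℤ) ∣ t₃ * t₄ - t₁ * t₂) :
    p = 3 := by
  haveI : Fact p.Prime := ⟨hp⟩
  have key : ∀ x y : ℤ, Int.gcd x y = 1 → ¬((x : ZMod p) = 0 ∧ (y : ZMod p) = 0) := by
    rintro x y hg ⟨hx, hy⟩
    rw [ZMod.intCast_zmod_eq_zero_iff_dvd] at hx hy
    have hd : (p : ℤ) ∣ Int.gcd x y := Int.dvd_coe_gcd hx hy
    rw [hg] at hd
    have h1 : (p : ℤ) = 1 := Int.eq_one_of_dvd_one (by positivity) hd
    have h2 : p = 1 := by exact_mod_cast h1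
    exact hp.one_lt.ne' h2
  set a₁ : ZMod p := (t₁ : ZMod p)
  set a₂ : ZMod p := (t₂ : ZMod p)
  set a₃ : ZMod p := (t₃ : ZMod p)
  set a₄ : ZMod p := (t₄ : ZMod p)
  have e1 : a₁ * a₂ + a₂ * a₃ + a₃ * a₄ = 0 := by
    have h := (ZMod.intCast_zmod_eq_zero_iff_dvd _ p).mpr h1
    push_cast at h; linear_combination h
  have e2 : a₁ * a₂ + a₁ * a₄ + a₃ * a₄ = 0 := by
    have h := (ZMod.intCast_zmod_eq_zero_iff_dvd _ p).mpr h2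
    push_cast at h; linear_combination h
  have e3 : a₃ * a₄ - a₁ * a₂ = 0 := by
    have h := (ZMod.intCast_zmod_eq_zero_iff_dvd _ p).mpr h3
    push_cast at h; linear_combination h
  have ebc : a₂ * a₃ - a₁ * a₄ = 0 := by linear_combination e1 - e2
  have h24' := key t₂ t₄ h24
  have h13' := key t₁ t₃ h13
  have h30 : (3 : ZMod p) = 0 := by
    by_cases hb2 : a₂ = 0
    · exfalso
      have h4 : a₄ ≠ 0 := fun h => h24' ⟨hb2, h⟩
      have h34 : a₃ * a₄ = 0 := by linear_combination e3 + a₁ * hb2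
      have h3z : a₃ = 0 := by
        rcases mul_eq_zero.mp h34 with h | h
        · exact h
        · exact absurd h h4
      have h1z : a₁ ≠ 0 := fun h => h13' ⟨h, h3z⟩
      have h14 : a₁ * a₄ = 0 := by linear_combination -ebc + a₃ * hb2
      rcases mul_eq_zero.mp h14 with h | h
      · exact h1z h
      · exact h4 h
    · have h23 : a₂ * (2 * a₁ + a₃) = 0 := by linear_combination e1 - e3
      have hs : 2 * a₁ + a₃ = 0 := by
        rcases mul_eq_zero.mp h23 with h | h
        · exact absurd h hb2
        · exact h
      have h1ne : a₁ ≠ 0 := fun h => h13' ⟨h, by linear_combination hs - 2 * h⟩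
      have hA : a₁ * (a₂ + 2 * a₄) = 0 := by linear_combination a₄ * hs - e3
      have hB : a₂ + 2 * a₄ = 0 := by
        rcases mul_eq_zero.mp hA with h | h
        · exact absurd h h1ne
        · exact h
      have h4ne : a₄ ≠ 0 := fun h => hb2 (by linear_combination hB - 2 * h)
      have h3aa : (3 : ZMod p) * (a₁ * a₄) = 0 := by
        linear_combination ebc - a₃ * hB + 2 * a₄ * hs
      rcases mul_eq_zero.mp h3aa with h | h
      · exact h
      · rcases mul_eq_zero.mp h with h' | h'
        · exact absurd h' h1ne
        · exact absurd h' h4ne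
  have hdvd : p ∣ 3 := by
    have h : ((3 : ℕ) : ZMod p) = 0 := by exact_mod_cast h30
    exact (ZMod.natCast_eq_zero_iff 3 p).mp h
  exact (Nat.prime_dvd_prime_iff_eq hp (by norm_num)).mp hdvd
end

section
/- Let t₁, t₂, t₃, t₄ be integers with gcd(t₁, t₃) = 1 and gcd(t₂, t₄) = 1, and let p ≠ 3 be a prime. Then at most 3 of the following five integers are divisible by p: t₁t₂+t₂t₃+t₃t₄, t₁t₂+t₁t₄+t₃t₄, t₃t₄-t₁t₂, t₁t₂+t₁t₄+t₂t₃, t₁t₄+t₂t₃+t₃t₄. -/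
lemma key_field {K : Type*} [Field K] (x₁ x₂ x₃ x₄ : K) (h3 : (3:K) ≠ 0)
    (h13 : x₁ ≠ 0 ∨ x₃ ≠ 0) (h24 : x₂ ≠ 0 ∨ x₄ ≠ 0)
    (e2 : x₃*x₄ - x₁*x₂ = 0)
    (e3 : x₁*x₂ + x₁*x₄ + x₂*x₃ = 0)
    (e01 : x₁*x₂ + x₂*x₃ + x₃*x₄ = 0 ∨ x₁*x₂ + x₁*x₄ + x₃*x₄ = 0) : False := by
  rcases e01 with h0 | h1
  · have hba : x₁*(x₄ - x₂) = 0 := by linear_combination e3 - h0 + e2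
    have hc : x₂*(x₃ + 2*x₁) = 0 := by linear_combination h0 - e2
    rcases eq_or_ne x₂ 0 with h2 | h2
    · have h4 : x₄ ≠ 0 := h24.resolve_left (by simpa using h2)
      have hx1 : x₁ = 0 := by
        rcases mul_eq_zero.mp hba with h | h
        · exact h
        · exact absurd (by linear_combination h + h2 : x₄ = 0) h4
      have hx3 : x₃ = 0 := by
        have h34 : x₃ * x₄ = 0 := by linear_combination e2 + x₁*h2
        rcases mul_eq_zero.mp h34 with h | h
        · exact h
        · exact absurd h h4
      exact (h13.resolve_left (by simpa using hx1)) hx3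
    · have hx3 : x₃ = -2*x₁ := by
        rcases mul_eq_zero.mp hc with h | h
        · exact absurd h h2
        · linear_combination h
      rcases eq_or_ne x₁ 0 with h1' | h1'
      · exact (h13.resolve_left (by simpa using h1')) (by rw [hx3, h1']; ring)
      · have h42 : x₄ = x₂ := by
          rcases mul_eq_zero.mp hba with h | h
          · exact absurd h h1'
          · linear_combination h
        have hfin : (3:K) * (x₁ * x₂) = 0 := by
          linear_combination -e2 + x₄*hx3 - 2*x₁*h42
        rcases mul_eq_zero.mp hfin with h | h
        · exact h3 h
        · rcases mul_eq_zero.mp h with h | h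
          · exact h1' h
          · exact h2 h
  · have hb : x₁*(x₄ + 2*x₂) = 0 := by linear_combination h1 - e2
    have hc : x₂*(x₃ - x₁) = 0 := by linear_combination e3 - h1 + e2
    rcases eq_or_ne x₁ 0 with h1' | h1'
    · have h3' : x₃ ≠ 0 := h13.resolve_left (by simpa using h1')
      have hx2 : x₂ = 0 := by
        have h23 : x₂ * x₃ = 0 := by linear_combination e3 - (x₂ + x₄)*h1'
        rcases mul_eq_zero.mp h23 with h | h
        · exact h
        · exact absurd h h3'
      have hx4 : x₄ = 0 := by
        have h34 : x₃ * x₄ = 0 := by linear_combination e2 + x₂*h1'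
        rcases mul_eq_zero.mp h34 with h | h
        · exact absurd h h3'
        · exact h
      exact (h24.resolve_left (by simpa using hx2)) hx4
    · have h4 : x₄ = -2*x₂ := by
        rcases mul_eq_zero.mp hb with h | h
        · exact absurd h h1'
        · linear_combination h
      rcases eq_or_ne x₂ 0 with h2 | h2
      · exact (h24.resolve_left (by simpa using h2)) (by rw [h4, h2]; ring)
      · have hx3 : x₃ = x₁ := by
          rcases mul_eq_zero.mp hc with h | h
          · exact absurd h h2
          · linear_combination h
        have hfin : (3:K) * (x₁ * x₂) = 0 := by
          linear_combination -e2 + x₄*hx3 + x₁*h4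
        rcases mul_eq_zero.mp hfin with h | h
        · exact h3 h
        · rcases mul_eq_zero.mp h with h | h
          · exact h1' h
          · exact h2 h

/-- For a prime `p ≠ 3` and `gcd(t₁,t₃) = gcd(t₂,t₄) = 1`, at most 3 of the
five quadratic values `p_{1,σ}(t)` are divisible by `p`. -/
theorem at_most_three_divisible (t₁ t₂ t₃ t₄ : ℤ) (p : ℕ) (hp : p.Prime) (hp3 : p ≠ 3)
    (h13 : Int.gcd t₁ t₃ = 1) (h24 : Int.gcd t₂ t₄ = 1) :
    ((Finset.univ : Finset (Fin 5)).filter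
      (fun i => (p : ℤ) ∣ ![t₁ * t₂ + t₂ * t₃ + t₃ * t₄,
                            t₁ * t₂ + t₁ * t₄ + t₃ * t₄,
                            t₃ * t₄ - t₁ * t₂,
                            t₁ * t₂ + t₁ * t₄ + t₂ * t₃,
                            t₁ * t₄ + t₂ * t₃ + t₃ * t₄] i)).card ≤ 3 := by
  by_contra hcon
  push_neg at hcon
  set v : Fin 5 → ℤ := ![t₁ * t₂ + t₂ * t₃ + t₃ * t₄,
                            t₁ * t₂ + t₁ * t₄ + t₃ * t₄,
                            t₃ * t₄ - t₁ * t₂,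
                            t₁ * t₂ + t₁ * t₄ + t₂ * t₃,
                            t₁ * t₄ + t₂ * t₃ + t₃ * t₄] with hv
  have hcon' : 3 < ((Finset.univ : Finset (Fin 5)).filter (fun i => (p:ℤ) ∣ v i)).card := hcon
  have key2 : ∀ i j : Fin 5, i ≠ j → (p:ℤ) ∣ v i ∨ (p:ℤ) ∣ v j := by
    intro i j hij
    by_contra h
    push_neg at h
    have hsub : ((Finset.univ : Finset (Fin 5)).filter (fun i => (p:ℤ) ∣ v i)) ⊆
        (Finset.univ : Finset (Fin 5)) \ {i, j} := by
      intro k hk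
      simp only [Finset.mem_filter] at hk
      simp only [Finset.mem_sdiff, Finset.mem_univ, Finset.mem_insert, Finset.mem_singleton,
        true_and]
      rintro (rfl | rfl)
      · exact h.1 hk.2
      · exact h.2 hk.2
    have hle := Finset.card_le_card hsub
    have hc2 : ({i, j} : Finset (Fin 5)).card = 2 := by
      rw [Finset.card_insert_of_notMem (by simpa using hij), Finset.card_singleton]
    rw [Finset.card_sdiff_of_subset (by simp)] at hle
    simp only [Finset.card_univ, Fintype.card_fin, hc2] at hle
    omega
  have hv0 : v 0 = t₁ * t₂ + t₂ * t₃ + t₃ * t₄ := rfl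
  have hv1 : v 1 = t₁ * t₂ + t₁ * t₄ + t₃ * t₄ := rfl
  have hv2 : v 2 = t₃ * t₄ - t₁ * t₂ := rfl
  have hv3 : v 3 = t₁ * t₂ + t₁ * t₄ + t₂ * t₃ := rfl
  have hv4 : v 4 = t₁ * t₄ + t₂ * t₃ + t₃ * t₄ := rfl
  have h43 : v 4 - v 3 = v 2 := by rw [hv2, hv3, hv4]; ring
  have h34 : v 4 - v 2 = v 3 := by rw [hv2, hv3, hv4]; ring
  have hP2 : (p:ℤ) ∣ v 2 := by
    by_cases h : (p:ℤ) ∣ v 2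
    · exact h
    · have ha := (key2 2 3 (by decide)).resolve_left h
      have hb := (key2 2 4 (by decide)).resolve_left h
      exact absurd (h43 ▸ dvd_sub hb ha) h
  have hP3 : (p:ℤ) ∣ v 3 := by
    rcases key2 3 4 (by decide) with h | h
    · exact h
    · exact h34 ▸ dvd_sub h hP2
  have hP01 : (p:ℤ) ∣ v 0 ∨ (p:ℤ) ∣ v 1 := key2 0 1 (by decide)
  -- move to ZMod p
  haveI : Fact p.Prime := ⟨hp⟩
  have cast0 : ∀ n : ℤ, (p:ℤ) ∣ n → ((n : ZMod p) = 0) := fun n h =>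
    (ZMod.intCast_zmod_eq_zero_iff_dvd n p).mpr h
  have h3K : ((3:ℕ) : ZMod p) ≠ 0 := by
    rw [Ne, ZMod.natCast_eq_zero_iff]
    intro h
    exact hp3 ((Nat.prime_dvd_prime_iff_eq hp (by norm_num)).mp h)
  have hnd : ∀ a b : ℤ, Int.gcd a b = 1 → ((a : ZMod p) ≠ 0 ∨ (b : ZMod p) ≠ 0) := by
    intro a b hab
    by_contra h
    push_neg at h
    have hda := (ZMod.intCast_zmod_eq_zero_iff_dvd a p).mp h.1
    have hdb := (ZMod.intCast_zmod_eq_zero_iff_dvd b p).mp h.2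
    have := Int.dvd_gcd hda hdb
    rw [hab] at this
    have : p ∣ 1 := by exact_mod_cast this
    exact hp.ne_one (Nat.dvd_one.mp this)
  have e2 : ((t₃:ZMod p)*(t₄:ZMod p) - (t₁:ZMod p)*(t₂:ZMod p) = 0) := by
    have := cast0 _ hP2; rw [hv2] at this; push_cast at this; exact this
  have e3 : ((t₁:ZMod p)*(t₂:ZMod p) + (t₁:ZMod p)*(t₄:ZMod p) + (t₂:ZMod p)*(t₃:ZMod p) = 0) := by
    have := cast0 _ hP3; rw [hv3] at this; push_cast at this; exact this
  have e01 : ((t₁:ZMod p)*(t₂:ZMod p) + (t₂:ZMod p)*(t₃:ZMod p) + (t₃:ZMod p)*(t₄:ZMod p) = 0) ∨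
      ((t₁:ZMod p)*(t₂:ZMod p) + (t₁:ZMod p)*(t₄:ZMod p) + (t₃:ZMod p)*(t₄:ZMod p) = 0) := by
    rcases hP01 with h | h
    · left; have := cast0 _ h; rw [hv0] at this; push_cast at this; exact this
    · right; have := cast0 _ h; rw [hv1] at this; push_cast at this; exact this
  exact key_field (t₁ : ZMod p) (t₂ : ZMod p) (t₃ : ZMod p) (t₄ : ZMod p)
    (by exact_mod_cast h3K) (hnd t₁ t₃ h13) (hnd t₂ t₄ h24) e2 e3 e01
end

section
/- Let p be a prime and α, β, γ integers with γ ≠ 0. If min(v_p(α), v_p(β)) < v_p(γ), then the subgroup Λ = {(x₁, x₂) ∈ ℤ² : αx₁ + βx₂ ≡ 0 mod γ} has index in ℤ² divisible by p. -/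
open AddSubgroup

/-- If `min(v_p(α), v_p(β)) < v_p(γ)` (with `v_p(0) = ∞`) and `γ ≠ 0`, then the
subgroup `{(x₁,x₂) ∈ ℤ² : αx₁ + βx₂ ≡ 0 mod γ}` has finite index divisible by
`p`. -/
theorem index_divisible_by_p (p : ℕ) (hp : p.Prime) (α β γ : ℤ) (hγ : γ ≠ 0)
    (hval : min (emultiplicity (p : ℤ) α) (emultiplicity (p : ℤ) β)
      < emultiplicity (p : ℤ) γ) :
    ∃ Λ : AddSubgroup (ℤ × ℤ),
      (∀ x : ℤ × ℤ, x ∈ Λ ↔ γ ∣ α * x.1 + β * x.2) ∧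
      Λ.FiniteIndex ∧ p ∣ Λ.index := by
  haveI : Fact p.Prime := ⟨hp⟩
  set f : ℤ × ℤ →+ ℤ := AddMonoidHom.mk' (fun x => α * x.1 + β * x.2)
    (by intro a b; simp; ring)
  set Λ : AddSubgroup (ℤ × ℤ) := (AddSubgroup.zmultiples γ).comap f with hΛ
  have hmem : ∀ x : ℤ × ℤ, x ∈ Λ ↔ γ ∣ α * x.1 + β * x.2 := by
    intro x
    simp [hΛ, AddSubgroup.mem_comap, Int.mem_zmultiples_iff, f]
  refine ⟨Λ, hmem, ?_, ?_⟩
  · -- finite index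
    have hle : (AddSubgroup.zmultiples γ).prod (AddSubgroup.zmultiples γ) ≤ Λ := by
      intro x hx
      rw [AddSubgroup.mem_prod] at hx
      obtain ⟨h1, h2⟩ := hx
      rw [Int.mem_zmultiples_iff] at h1 h2
      rw [hmem]
      exact dvd_add (h1.mul_left α) (h2.mul_left β)
    haveI : ((AddSubgroup.zmultiples γ).prod (AddSubgroup.zmultiples γ)).FiniteIndex := by
      constructor
      simpa using hγ
    exact AddSubgroup.finiteIndex_of_le hle
  · -- p divides the index
    have hne : min (emultiplicity (p : ℤ) α) (emultiplicity (p : ℤ) β) ≠ ⊤ :=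
      ne_top_of_lt hval
    obtain ⟨m, hm⟩ := WithTop.ne_top_iff_exists.mp hne
    have hmα : (p : ℤ) ^ m ∣ α :=
      pow_dvd_of_le_emultiplicity (le_trans (le_of_eq hm) (min_le_left _ _))
    have hmβ : (p : ℤ) ^ m ∣ β :=
      pow_dvd_of_le_emultiplicity (le_trans (le_of_eq hm) (min_le_right _ _))
    have hmγ : (p : ℤ) ^ (m + 1) ∣ γ := by
      apply pow_dvd_of_le_emultiplicity
      rw [Nat.cast_add, Nat.cast_one]
      exact Order.add_one_le_of_lt (lt_of_eq_of_lt hm hval)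
    obtain ⟨α', hα'⟩ := hmα
    obtain ⟨β', hβ'⟩ := hmβ
    have hnotboth : ¬ ((p : ℤ) ∣ α') ∨ ¬ ((p : ℤ) ∣ β') := by
      by_contra hcon
      push_neg at hcon
      obtain ⟨⟨a, ha⟩, ⟨b, hb⟩⟩ := hcon
      have h1 : (p : ℤ) ^ (m + 1) ∣ α := ⟨a, by rw [hα', ha]; ring⟩
      have h2 : (p : ℤ) ^ (m + 1) ∣ β := ⟨b, by rw [hβ', hb]; ring⟩
      have hle2 : ((m + 1 : ℕ) : ℕ∞) ≤
          min (emultiplicity (p : ℤ) α) (emultiplicity (p : ℤ) β) :=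
        le_min (le_emultiplicity_of_pow_dvd h1) (le_emultiplicity_of_pow_dvd h2)
      rw [← hm] at hle2
      exact absurd (Nat.cast_le.mp hle2) (by omega)
    set g : ℤ × ℤ →+ ZMod p := AddMonoidHom.mk'
      (fun x => ((α' * x.1 + β' * x.2 : ℤ) : ZMod p))
      (by intro a b; simp only [Prod.fst_add, Prod.snd_add]; push_cast; ring) with hg
    have hpm0 : ((p : ℤ) ^ m) ≠ 0 := pow_ne_zero _ (by exact_mod_cast hp.ne_zero)
    have hle : Λ ≤ g.ker := by
      intro x hx
      rw [hmem] at hx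
      have hdvd : (p : ℤ) ^ (m + 1) ∣ α * x.1 + β * x.2 := dvd_trans hmγ hx
      obtain ⟨c, hc⟩ := hdvd
      have h2 : (p : ℤ) ∣ α' * x.1 + β' * x.2 := by
        refine ⟨c, ?_⟩
        apply mul_left_cancel₀ hpm0
        calc (p : ℤ) ^ m * (α' * x.1 + β' * x.2)
            = α * x.1 + β * x.2 := by rw [hα', hβ']; ring
          _ = (p : ℤ) ^ (m + 1) * c := hc
          _ = (p : ℤ) ^ m * ((p : ℤ) * c) := by ring
      rw [AddMonoidHom.mem_ker, hg]
      simpa using (ZMod.intCast_zmod_eq_zero_iff_dvd _ p).mpr h2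
    have hsurj : Function.Surjective g := by
      rcases hnotboth with h | h
      · intro c
        have hu : ((α' : ZMod p)) ≠ 0 := by
          rw [Ne, ZMod.intCast_zmod_eq_zero_iff_dvd]
          exact h
        refine ⟨(((c * (α' : ZMod p)⁻¹).val : ℤ), 0), ?_⟩
        rw [hg]
        simp only [AddMonoidHom.mk'_apply]
        push_cast
        rw [ZMod.natCast_val, ZMod.cast_id]
        field_simp
        simp
      · intro c
        have hu : ((β' : ZMod p)) ≠ 0 := by
          rw [Ne, ZMod.intCast_zmod_eq_zero_iff_dvd]
          exact h
        refine ⟨(0, ((c * (β' : ZMod p)⁻¹).val : ℤ)), ?_⟩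
        rw [hg]
        simp only [AddMonoidHom.mk'_apply]
        push_cast
        rw [ZMod.natCast_val, ZMod.cast_id]
        field_simp
        simp
    have hker : g.ker.index = p := by
      rw [AddSubgroup.index_ker, AddMonoidHom.range_eq_top.mpr hsurj]
      rw [Nat.card_congr AddSubgroup.topEquiv.toEquiv, Nat.card_zmod]
    exact hker ▸ AddSubgroup.index_dvd_of_le hle
end
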